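/- Let n ≥ 2 and k ≥ 1, and set D := 2·e·n·(ln n)/k. Then ∑_{d=⌈D⌉}^{n} (1 − d/(e·n))^k ≤ 1/n, provided D ≤ n. -/

import Mathlib

/-! Since `1 - x ≤ exp (-x)`, each summand with `d ≥ D` is at most
`exp (-k d / (e n)) ≤ exp (-2 log n) = 1 / n²`, and there are at most `n` summands. -/

open Real Finset

lemma one_sub_pow_le_exp_neg_mul {x : ℝ} (hx : x ≤ 1) (k : ℕ) :
    (1 - x) ^ k ≤ exp (-(k * x)) := by
  calc (1 - x) ^ k ≤ exp (-x) ^ k := pow_le_pow_left₀ (by linarith) (one_sub_le_exp_neg x) k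
    _ = exp (-(k * x)) := by rw [← exp_nat_mul, mul_neg]

lemma exp_neg_le_one_div_sq {n t : ℝ} (hn : 0 < n) (ht : 2 * log n ≤ t) :
    exp (-t) ≤ 1 / n ^ 2 := by
  calc exp (-t) ≤ exp (-(2 * log n)) := exp_le_exp.mpr (neg_le_neg ht)
    _ = 1 / n ^ 2 := by
      rw [exp_neg, ← Nat.cast_ofNat, exp_nat_mul, exp_log hn, one_div]

lemma one_sub_div_pow_le_one_div_sq {n d : ℝ} {k : ℕ} (hn : 0 < n) (hk : 0 < k)
    (hdn : d ≤ n) (hDd : 2 * exp 1 * n * log n / k ≤ d) :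
    (1 - d / (exp 1 * n)) ^ k ≤ 1 / n ^ 2 := by
  have hen : 0 < exp 1 * n := by positivity
  have hd_le : d / (exp 1 * n) ≤ 1 := by
    rw [div_le_one hen]
    nlinarith [add_one_le_exp 1]
  have hlog : 2 * log n ≤ k * (d / (exp 1 * n)) := by
    rw [div_le_iff₀ (by exact_mod_cast hk)] at hDd
    rw [mul_div_assoc', le_div_iff₀ hen]
    linarith
  exact (one_sub_pow_le_exp_neg_mul hd_le k).trans (exp_neg_le_one_div_sq hn hlog)

theorem no_early_switch_general (n k : ℕ) (hn : 2 ≤ n) (hk : 1 ≤ k) :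
    ∑ d ∈ Finset.Icc ⌈2 * Real.exp 1 * n * Real.log n / k⌉₊ n,
        (1 - (d : ℝ) / (Real.exp 1 * n)) ^ k ≤ 1 / n := by
  set D := 2 * exp 1 * n * log n / k
  have hn_pos : (0 : ℝ) < n := by positivity
  have hD_pos : 0 < D := by
    have : 0 < log n := log_pos (by exact_mod_cast hn)
    positivity
  have hterm : ∀ d ∈ Icc ⌈D⌉₊ n, (1 - (d : ℝ) / (exp 1 * n)) ^ k ≤ 1 / (n : ℝ) ^ 2 := by
    intro d hd
    obtain ⟨hDd, hdn⟩ := mem_Icc.mp hd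
    exact one_sub_div_pow_le_one_div_sq hn_pos hk (by exact_mod_cast hdn)
      ((Nat.le_ceil D).trans (by exact_mod_cast hDd))
  have hcard : #(Icc ⌈D⌉₊ n) ≤ n := by
    have := Nat.ceil_pos.mpr hD_pos
    rw [Nat.card_Icc]
    omega
  calc ∑ d ∈ Icc ⌈D⌉₊ n, (1 - (d : ℝ) / (exp 1 * n)) ^ k
      ≤ #(Icc ⌈D⌉₊ n) • (1 / (n : ℝ) ^ 2) := sum_le_card_nsmul _ _ _ hterm
    _ ≤ n * (1 / (n : ℝ) ^ 2) := by
      rw [nsmul_eq_mul]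
      gcongr
    _ = 1 / n := by field_simp

theorem no_early_switch (n k : ℕ) (hn : 2 ≤ n) (hk : 1 ≤ k)
    (hD : 2 * Real.exp 1 * n * Real.log n / k ≤ n) :
    ∑ d ∈ Finset.Icc ⌈2 * Real.exp 1 * n * Real.log n / k⌉₊ n,
        (1 - (d : ℝ) / (Real.exp 1 * n)) ^ k ≤ 1 / n :=
  no_early_switch_general n k hn hk
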